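/- arXiv:1707.04193 — 3 statements merged into one kernel-verified Lean document; each statement's English description precedes it below -/
import Mathlib

section
/- Define Q(s) = ∫_ℝ dX / ((X² + 1)^{3/2} ((X - s)² + 1)^{3/2}) for s ∈ ℝ. Then there exists C > 0 such that Q(s) ≤ C / (1 + |s|³) for all s ∈ ℝ. -/
/-!
With `A = X² + 1`, `B = (X - s)² + 1` and `p = 3/2`, one of `|X|`, `|X - s|` is at least `|s|/2`,
so `max A B ≥ 1 + s²/4`. Since `min A B ≤ (min A B)^p`, this gives
`(A^p B^p)⁻¹ ≤ (1 + s²/4)^(-p) (A⁻¹ + B⁻¹)`, and the two Cauchy densities on the right integrate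
to `2π`. Finally `(1 + s²/4)^(-3/2) ≲ (1 + |s|³)⁻¹`.
-/

open MeasureTheory Real

lemma inv_rpow_mul_rpow_le {a b p : ℝ} (ha : 1 ≤ a) (hb : 1 ≤ b) (hp : 1 ≤ p) :
    (a ^ p * b ^ p)⁻¹ ≤ (max a b ^ p)⁻¹ * (a⁻¹ + b⁻¹) := by
  wlog hab : a ≤ b generalizing a b
  · simpa only [max_comm, mul_comm, add_comm] using this hb ha (le_of_not_ge hab)
  have hmin : a * b ^ p ≤ a ^ p * b ^ p :=
    mul_le_mul_of_nonneg_right (self_le_rpow_of_one_le ha hp) (by positivity)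
  calc (a ^ p * b ^ p)⁻¹ ≤ (a * b ^ p)⁻¹ := inv_anti₀ (by positivity) hmin
    _ = (b ^ p)⁻¹ * a⁻¹ := by rw [mul_inv, mul_comm]
    _ ≤ (max a b ^ p)⁻¹ * (a⁻¹ + b⁻¹) := by
      rw [max_eq_right hab]
      gcongr
      exact le_add_of_nonneg_right (by positivity)

lemma one_add_sq_div_four_le_max (X s : ℝ) :
    1 + s ^ 2 / 4 ≤ max (X ^ 2 + 1) ((X - s) ^ 2 + 1) := by
  rcases le_total (X ^ 2) ((X - s) ^ 2) with h | h
  · exact le_max_of_le_right (by nlinarith [sq_nonneg (2 * X - s)])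
  · exact le_max_of_le_left (by nlinarith [sq_nonneg (2 * X - s)])

lemma integrand_le (X s : ℝ) :
    1 / ((X ^ 2 + 1) ^ ((3:ℝ)/2) * ((X - s) ^ 2 + 1) ^ ((3:ℝ)/2))
      ≤ ((1 + s ^ 2 / 4) ^ ((3:ℝ)/2))⁻¹ * ((1 + X ^ 2)⁻¹ + (1 + (X - s) ^ 2)⁻¹) := by
  rw [one_div, add_comm 1 (X ^ 2), add_comm 1 ((X - s) ^ 2)]
  refine (inv_rpow_mul_rpow_le (by nlinarith) (by nlinarith) (by norm_num)).trans ?_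
  gcongr
  exact one_add_sq_div_four_le_max X s

lemma integrable_inv_one_add_sub_sq (s : ℝ) :
    Integrable fun X : ℝ ↦ (1 + (X - s) ^ 2)⁻¹ :=
  integrable_inv_one_add_sq.comp_sub_right s

lemma integral_inv_one_add_sub_sq (s : ℝ) : ∫ X : ℝ, (1 + (X - s) ^ 2)⁻¹ = π := by
  rw [integral_sub_right_eq_self (fun X ↦ (1 + X ^ 2)⁻¹) s, integral_univ_inv_one_add_sq]

lemma one_add_abs_pow_three_le (s : ℝ) :
    1 + |s| ^ 3 ≤ 8 ^ ((3:ℝ)/2) * (1 + s ^ 2 / 4) ^ ((3:ℝ)/2) := by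
  have hsq : (1 + |s|) ^ 2 ≤ 8 * (1 + s ^ 2 / 4) := by
    nlinarith [sq_nonneg (|s| - 1), sq_abs s, abs_nonneg s]
  calc 1 + |s| ^ 3 ≤ (1 + |s|) ^ 3 := by nlinarith [abs_nonneg s]
    _ = ((1 + |s|) ^ 2) ^ ((3:ℝ)/2) := by
      rw [← rpow_natCast (1 + |s|) 2, ← rpow_mul (by positivity)]
      norm_num
    _ ≤ (8 * (1 + s ^ 2 / 4)) ^ ((3:ℝ)/2) := by gcongr
    _ = 8 ^ ((3:ℝ)/2) * (1 + s ^ 2 / 4) ^ ((3:ℝ)/2) := mul_rpow (by norm_num) (by positivity)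

theorem stmt_4 :
    ∃ C > 0, ∀ s : ℝ,
      (∫ X : ℝ, 1 / ((X^2 + 1) ^ ((3:ℝ)/2) * ((X - s)^2 + 1) ^ ((3:ℝ)/2)))
        ≤ C / (1 + |s|^3) := by
  refine ⟨2 * π * 8 ^ ((3:ℝ)/2), by positivity, fun s ↦ ?_⟩
  set M := (1 + s ^ 2 / 4) ^ ((3:ℝ)/2)
  have hM : 0 < M := by positivity
  have hdom : Integrable fun X : ℝ ↦ M⁻¹ * ((1 + X ^ 2)⁻¹ + (1 + (X - s) ^ 2)⁻¹) :=
    (integrable_inv_one_add_sq.add (integrable_inv_one_add_sub_sq s)).const_mul _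
  calc (∫ X : ℝ, 1 / ((X^2 + 1) ^ ((3:ℝ)/2) * ((X - s)^2 + 1) ^ ((3:ℝ)/2)))
      ≤ ∫ X : ℝ, M⁻¹ * ((1 + X ^ 2)⁻¹ + (1 + (X - s) ^ 2)⁻¹) :=
        integral_mono_of_nonneg (.of_forall fun X ↦ by positivity) hdom
          (.of_forall fun X ↦ integrand_le X s)
    _ = 2 * π * M⁻¹ := by
      rw [integral_const_mul, integral_add integrable_inv_one_add_sq
        (integrable_inv_one_add_sub_sq s), integral_univ_inv_one_add_sq,
        integral_inv_one_add_sub_sq]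
      ring
    _ ≤ 2 * π * 8 ^ ((3:ℝ)/2) / (1 + |s|^3) := by
      rw [mul_div_assoc]
      gcongr
      rw [le_div_iff₀ (by positivity), inv_mul_le_iff₀ hM, mul_comm]
      exact one_add_abs_pow_three_le s
end

section
/- Let s > 1, let U ⊂ ℝ³ be a bounded open set with 0 ∈ U and C¹ boundary, fix x ∈ ℝ³, and let ξ : ℝ³ → [0,1] be smooth, radially symmetric, equal to 1 on {|y| ≥ 1} and 0 on {|y| ≤ 1/2}. Then |∫_{RU - x} ∇(|y|^{-s}) ξ(y) dy - ∫_{RU} ∇(|y|^{-s}) ξ(y) dy| ≤ C(x, U) R^{2} / R^{s+1} for all R large enough, and hence this difference tends to 0 as R → ∞. -/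
open MeasureTheory Filter Pointwise

/-- A bounded open set in ℝ³ with `C¹` boundary, described by a `C¹` defining function. -/
def HasC1Boundary (U : Set (EuclideanSpace ℝ (Fin 3))) : Prop :=
  ∃ F : EuclideanSpace ℝ (Fin 3) → ℝ, ContDiff ℝ 1 F ∧ U = F ⁻¹' (Set.Iio 0) ∧
    frontier U = F ⁻¹' {0} ∧ ∀ y ∈ frontier U, gradient F y ≠ 0

lemma aux_rpow_sub (p : ℝ) (hp : 1 ≤ p) {a b : ℝ} (hb : 0 ≤ b) (hba : b ≤ a) :
    a ^ p - b ^ p ≤ p * a ^ (p - 1) * (a - b) := by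
  rcases eq_or_lt_of_le (hb.trans hba) with h | ha
  · have hb0 : b = 0 := le_antisymm (hba.trans h.symm.le) hb
    subst hb0
    rw [← h, Real.zero_rpow (by linarith : p ≠ 0)]
    simp
  · set t := b / a with ht
    have ht0 : 0 ≤ t := div_nonneg hb ha.le
    have ht1 : t ≤ 1 := (div_le_one ha).2 hba
    have hber : 1 + p * (t - 1) ≤ (1 + (t - 1)) ^ p :=
      one_add_mul_self_le_rpow_one_add (by linarith) hp
    have htt : (1 : ℝ) + (t - 1) = t := by ring
    rw [htt] at hber
    have hbt : b = a * t := by rw [ht]; field_simp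
    have hbp : b ^ p = a ^ p * t ^ p := by
      rw [hbt, Real.mul_rpow ha.le ht0]
    have hap : a ^ p = a ^ (p - 1) * a := by
      rw [← Real.rpow_add_one ha.ne' (p - 1)]
      ring_nf
    have hap0 : (0:ℝ) ≤ a ^ p := (Real.rpow_pos_of_pos ha p).le
    have key : a ^ p * (1 - t ^ p) ≤ a ^ p * (p * (1 - t)) := by
      apply mul_le_mul_of_nonneg_left _ hap0
      nlinarith [hber]
    have : a ^ p * (p * (1 - t)) = p * a ^ (p - 1) * (a - b) := by
      rw [hap, hbt]; ring
    nlinarith [key, hbp]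

lemma aux_inv_rpow_diff (q : ℝ) (hq : 1 ≤ q) {m a b : ℝ} (hm : 1 ≤ m) (ha : m ≤ a) (hb : m ≤ b) :
    |(a ^ q)⁻¹ - (b ^ q)⁻¹| * b ≤ q * |a - b| / m ^ q := by
  have hm0 : (0:ℝ) < m := lt_of_lt_of_le one_pos hm
  have ha0 : (0:ℝ) < a := lt_of_lt_of_le hm0 ha
  have hb0 : (0:ℝ) < b := lt_of_lt_of_le hm0 hb
  have hAq : (0:ℝ) < a ^ q := Real.rpow_pos_of_pos ha0 q
  have hBq : (0:ℝ) < b ^ q := Real.rpow_pos_of_pos hb0 q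
  have hMq : (0:ℝ) < m ^ q := Real.rpow_pos_of_pos hm0 q
  have hMA : m ^ q ≤ a ^ q := Real.rpow_le_rpow hm0.le ha (by linarith)
  have hMB : m ^ q ≤ b ^ q := Real.rpow_le_rpow hm0.le hb (by linarith)
  have hMA1 : m ^ (q-1) ≤ a ^ (q-1) := Real.rpow_le_rpow hm0.le ha (by linarith)
  have hMB1 : m ^ (q-1) ≤ b ^ (q-1) := Real.rpow_le_rpow hm0.le hb (by linarith)
  have hM1 : (0:ℝ) < m ^ (q-1) := Real.rpow_pos_of_pos hm0 _
  have hA1 : (0:ℝ) < a ^ (q-1) := Real.rpow_pos_of_pos ha0 _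
  have hB1 : (0:ℝ) < b ^ (q-1) := Real.rpow_pos_of_pos hb0 _
  have haq : a ^ q = a ^ (q-1) * a := by
    rw [← Real.rpow_add_one ha0.ne' (q - 1)]; ring_nf
  have hbq : b ^ q = b ^ (q-1) * b := by
    rw [← Real.rpow_add_one hb0.ne' (q - 1)]; ring_nf
  have hmq : m ^ q = m ^ (q-1) * m := by
    rw [← Real.rpow_add_one hm0.ne' (q - 1)]; ring_nf
  rw [le_div_iff₀ hMq]
  rcases le_total a b with hab | hba
  · have hABq : a ^ q ≤ b ^ q := Real.rpow_le_rpow ha0.le hab (by linarith)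
    have habs : |(a ^ q)⁻¹ - (b ^ q)⁻¹| = (b ^ q - a ^ q) / (a ^ q * b ^ q) := by
      rw [abs_of_nonneg (by
        have := inv_anti₀ hAq hABq
        linarith)]
      rw [inv_sub_inv hAq.ne' hBq.ne']
    have hsub : b ^ q - a ^ q ≤ q * b ^ (q-1) * (b - a) := aux_rpow_sub q hq ha0.le hab
    have habs2 : |a - b| = b - a := by rw [abs_sub_comm, abs_of_nonneg (by linarith)]
    rw [habs, habs2, div_mul_eq_mul_div, div_mul_eq_mul_div, div_le_iff₀ (by positivity)]
    have h1 : (b ^ q - a ^ q) * b * m ^ q ≤ (q * b ^ (q-1) * (b - a)) * b * m ^ q := by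
      apply mul_le_mul_of_nonneg_right (mul_le_mul_of_nonneg_right hsub hb0.le) hMq.le
    have h2 : (q * b ^ (q-1) * (b - a)) * b * m ^ q = q * (b - a) * (b ^ q * m ^ q) := by
      rw [hbq]; ring
    have h3 : q * (b - a) * (b ^ q * m ^ q) ≤ q * (b - a) * (b ^ q * a ^ q) := by
      apply mul_le_mul_of_nonneg_left (mul_le_mul_of_nonneg_left hMA hBq.le)
      have : (0:ℝ) ≤ b - a := by linarith
      positivity
    calc (b ^ q - a ^ q) * b * m ^ q ≤ q * (b - a) * (b ^ q * m ^ q) := by rw [← h2]; exact h1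
      _ ≤ q * (b - a) * (b ^ q * a ^ q) := h3
      _ = q * (b - a) * (a ^ q * b ^ q) := by ring
  · have hABq : b ^ q ≤ a ^ q := Real.rpow_le_rpow hb0.le hba (by linarith)
    have habs : |(a ^ q)⁻¹ - (b ^ q)⁻¹| = (a ^ q - b ^ q) / (a ^ q * b ^ q) := by
      rw [abs_sub_comm, abs_of_nonneg (by
        have := inv_anti₀ hBq hABq
        linarith)]
      rw [inv_sub_inv hBq.ne' hAq.ne', mul_comm (b ^ q)]
    have hsub : a ^ q - b ^ q ≤ q * a ^ (q-1) * (a - b) := aux_rpow_sub q hq hb0.le hba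
    have habs2 : |a - b| = a - b := abs_of_nonneg (by linarith)
    rw [habs, habs2, div_mul_eq_mul_div, div_mul_eq_mul_div, div_le_iff₀ (by positivity)]
    have h1 : (a ^ q - b ^ q) * b * m ^ q ≤ (q * a ^ (q-1) * (a - b)) * b * m ^ q := by
      apply mul_le_mul_of_nonneg_right (mul_le_mul_of_nonneg_right hsub hb0.le) hMq.le
    have hab0 : (0:ℝ) ≤ a - b := by linarith
    have k1 : a ^ (q-1) * m ≤ a ^ q := by rw [haq]; exact mul_le_mul_of_nonneg_left ha hA1.le
    have k2 : m ^ (q-1) * b ≤ b ^ q := by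
      rw [hbq]; exact mul_le_mul_of_nonneg_right hMB1 hb0.le
    have h2 : (q * a ^ (q-1) * (a - b)) * b * m ^ q
        = q * (a - b) * ((a ^ (q-1) * m) * (m ^ (q-1) * b)) := by
      rw [hmq]; ring
    have h3 : q * (a - b) * ((a ^ (q-1) * m) * (m ^ (q-1) * b)) ≤ q * (a - b) * (a ^ q * b ^ q) := by
      apply mul_le_mul_of_nonneg_left _ (by positivity)
      apply mul_le_mul k1 k2 (by positivity) hAq.le
    calc (a ^ q - b ^ q) * b * m ^ q ≤ q * (a - b) * ((a ^ (q-1) * m) * (m ^ (q-1) * b)) := by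
          rw [← h2]; exact h1
      _ ≤ q * (a - b) * (a ^ q * b ^ q) := h3

lemma aux_vec_diff {E : Type*} [NormedAddCommGroup E] [NormedSpace ℝ E]
    (s : ℝ) (hs : 0 < s) (x y : E) {m : ℝ} (hm : 1 ≤ m)
    (hy : m ≤ ‖y‖) (hyx : m ≤ ‖y - x‖) :
    ‖((-s) / ‖y - x‖ ^ (s+2)) • (y - x) - ((-s) / ‖y‖ ^ (s+2)) • y‖
      ≤ s * (s+3) * ‖x‖ / m ^ (s+2) := by
  have hm0 : (0:ℝ) < m := lt_of_lt_of_le one_pos hm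
  have ha0 : (0:ℝ) < ‖y - x‖ := lt_of_lt_of_le hm0 hyx
  have hb0 : (0:ℝ) < ‖y‖ := lt_of_lt_of_le hm0 hy
  set a := ‖y - x‖ with hadef
  set b := ‖y‖ with hbdef
  have hAq : (0:ℝ) < a ^ (s+2) := Real.rpow_pos_of_pos ha0 _
  have hBq : (0:ℝ) < b ^ (s+2) := Real.rpow_pos_of_pos hb0 _
  have hMq : (0:ℝ) < m ^ (s+2) := Real.rpow_pos_of_pos hm0 _
  have hMA : m ^ (s+2) ≤ a ^ (s+2) := Real.rpow_le_rpow hm0.le hyx (by linarith)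
  have hrw : ((-s) / a ^ (s+2)) • (y - x) - ((-s) / b ^ (s+2)) • y
      = (-s) • (((a ^ (s+2))⁻¹ - (b ^ (s+2))⁻¹) • y - (a ^ (s+2))⁻¹ • x) := by
    simp only [div_eq_mul_inv, mul_smul, smul_sub, sub_smul]
    module
  rw [hrw, norm_smul, Real.norm_eq_abs, abs_neg, abs_of_pos hs]
  have hW : ‖((a ^ (s+2))⁻¹ - (b ^ (s+2))⁻¹) • y - (a ^ (s+2))⁻¹ • x‖
      ≤ |(a ^ (s+2))⁻¹ - (b ^ (s+2))⁻¹| * b + (a ^ (s+2))⁻¹ * ‖x‖ := by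
    refine (norm_sub_le _ _).trans ?_
    rw [norm_smul, norm_smul, Real.norm_eq_abs, Real.norm_eq_abs,
      abs_of_pos (inv_pos.2 hAq)]
  have hab : |a - b| ≤ ‖x‖ := by
    refine (abs_norm_sub_norm_le (y - x) y).trans ?_
    simp
  have h1 : |(a ^ (s+2))⁻¹ - (b ^ (s+2))⁻¹| * b ≤ (s+2) * ‖x‖ / m ^ (s+2) := by
    refine (aux_inv_rpow_diff (s+2) (by linarith) hm hyx hy).trans ?_
    gcongr
  have h2 : (a ^ (s+2))⁻¹ * ‖x‖ ≤ ‖x‖ / m ^ (s+2) := by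
    rw [div_eq_inv_mul]
    exact mul_le_mul_of_nonneg_right (inv_anti₀ hMq hMA) (norm_nonneg x)
  calc s * ‖((a ^ (s+2))⁻¹ - (b ^ (s+2))⁻¹) • y - (a ^ (s+2))⁻¹ • x‖
      ≤ s * ((s+2) * ‖x‖ / m ^ (s+2) + ‖x‖ / m ^ (s+2)) := by
        apply mul_le_mul_of_nonneg_left _ hs.le
        exact hW.trans (add_le_add h1 h2)
    _ = s * (s+3) * ‖x‖ / m ^ (s+2) := by ring

set_option maxHeartbeats 1000000 in
theorem stmt_16 (s : ℝ) (hs : 1 < s)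
    (U : Set (EuclideanSpace ℝ (Fin 3))) (hUo : IsOpen U) (hUb : Bornology.IsBounded U)
    (hU0 : (0 : EuclideanSpace ℝ (Fin 3)) ∈ U) (hUbd : HasC1Boundary U)
    (x : EuclideanSpace ℝ (Fin 3))
    (ξ : EuclideanSpace ℝ (Fin 3) → ℝ) (hξs : ContDiff ℝ (⊤ : ℕ∞) ξ)
    (hξ01 : ∀ y, ξ y ∈ Set.Icc (0:ℝ) 1)
    (hξ1 : ∀ y : EuclideanSpace ℝ (Fin 3), 1 ≤ ‖y‖ → ξ y = 1)
    (hξ0 : ∀ y : EuclideanSpace ℝ (Fin 3), ‖y‖ ≤ 1/2 → ξ y = 0)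
    (hξrad : ∀ y z : EuclideanSpace ℝ (Fin 3), ‖y‖ = ‖z‖ → ξ y = ξ z) :
    (∃ C > 0, ∃ R₀ : ℝ, ∀ R ≥ R₀,
      ‖(∫ y in (fun z => z - x) '' (R • U), (ξ y * (-s) / ‖y‖ ^ (s + 2)) • y)
        - ∫ y in R • U, (ξ y * (-s) / ‖y‖ ^ (s + 2)) • y‖ ≤ C * R ^ 2 / R ^ (s + 1)) ∧
    Tendsto (fun R : ℝ =>
        (∫ y in (fun z => z - x) '' (R • U), (ξ y * (-s) / ‖y‖ ^ (s + 2)) • y)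
          - ∫ y in R • U, (ξ y * (-s) / ‖y‖ ^ (s + 2)) • y)
      atTop (nhds 0) := by
  have hs0 : (0:ℝ) < s := by linarith
  set f : EuclideanSpace ℝ (Fin 3) → EuclideanSpace ℝ (Fin 3) :=
    fun y => (ξ y * (-s) / ‖y‖ ^ (s + 2)) • y with hfdef
  -- continuity of f
  have hfc : Continuous f := by
    rw [continuous_iff_continuousAt]
    intro y
    rcases lt_or_ge ‖y‖ (1/2 : ℝ) with hy | hy
    · have hev : ∀ᶠ z in nhds y, f z = 0 := by
        filter_upwards [Metric.ball_mem_nhds y (by linarith : (0:ℝ) < 1/2 - ‖y‖)] with z hz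
        have h1 : ‖z - y‖ < 1/2 - ‖y‖ := by simpa [dist_eq_norm] using hz
        have h2 : ‖z‖ - ‖y‖ ≤ ‖z - y‖ := norm_sub_norm_le z y
        have h3 : ‖z‖ ≤ 1/2 := by linarith
        simp [hfdef, hξ0 z h3]
      exact continuousAt_const.congr (hev.mono fun z h => h.symm)
    · have hy0 : (0:ℝ) < ‖y‖ := by linarith
      have h1 : ContinuousAt (fun z : EuclideanSpace ℝ (Fin 3) => ‖z‖ ^ (s+2)) y :=
        continuous_norm.continuousAt.rpow_const (Or.inl hy0.ne')
      exact ((((hξs.continuous.continuousAt).mul continuousAt_const).div h1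
        (Real.rpow_pos_of_pos hy0 _).ne').smul continuousAt_id)
  -- integrability on bounded sets
  have hint : ∀ (g : EuclideanSpace ℝ (Fin 3) → EuclideanSpace ℝ (Fin 3)), Continuous g →
      ∀ t : Set (EuclideanSpace ℝ (Fin 3)), Bornology.IsBounded t → IntegrableOn g t := by
    intro g hg t ht
    obtain ⟨r, hr⟩ := ht.subset_closedBall 0
    exact (hg.continuousOn.integrableOn_compact (isCompact_closedBall 0 r)).mono_set hr
  have hgc : Continuous (fun y => f (y - x)) := hfc.comp (continuous_id.sub continuous_const)
  -- pointwise bound on f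
  have hfb : ∀ (r : ℝ), 0 < r → ∀ z : EuclideanSpace ℝ (Fin 3), r ≤ ‖z‖ →
      ‖f z‖ ≤ s / r ^ (s + 1) := by
    intro r hr z hz
    have hz0 : (0:ℝ) < ‖z‖ := lt_of_lt_of_le hr hz
    have hzq : ‖z‖ ^ (s+2) = ‖z‖ ^ (s+1) * ‖z‖ := by
      rw [← Real.rpow_add_one hz0.ne' (s+1)]; ring_nf
    have h01 := hξ01 z
    have habs : |ξ z * (-s) / ‖z‖ ^ (s + 2)| ≤ s / ‖z‖ ^ (s+2) := by
      rw [abs_div, abs_of_pos (Real.rpow_pos_of_pos hz0 _), abs_mul, abs_neg,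
        abs_of_pos hs0, abs_of_nonneg h01.1]
      gcongr
      nlinarith [h01.2]
    calc ‖f z‖ = |ξ z * (-s) / ‖z‖ ^ (s + 2)| * ‖z‖ := by
          simp only [hfdef, norm_smul, Real.norm_eq_abs]
      _ ≤ s / ‖z‖ ^ (s+2) * ‖z‖ := mul_le_mul_of_nonneg_right habs (norm_nonneg z)
      _ = s / ‖z‖ ^ (s+1) := by rw [hzq]; field_simp
      _ ≤ s / r ^ (s+1) := by
          apply div_le_div_of_nonneg_left hs0.le (Real.rpow_pos_of_pos hr _)
          exact Real.rpow_le_rpow hr.le hz (by linarith)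
  -- translation
  have hmp : MeasurePreserving (fun z : EuclideanSpace ℝ (Fin 3) => z - x) volume volume :=
    measurePreserving_sub_right volume x
  have hemb : MeasurableEmbedding (fun z : EuclideanSpace ℝ (Fin 3) => z - x) :=
    (MeasurableEquiv.subRight x).measurableEmbedding
  have hT : ∀ t : Set (EuclideanSpace ℝ (Fin 3)),
      ∫ y in (fun z => z - x) '' t, f y = ∫ y in t, f (y - x) := fun t =>
    hmp.setIntegral_image_emb hemb f t
  -- geometric constants
  obtain ⟨d, hd0, hdU⟩ := Metric.isOpen_iff.1 hUo 0 hU0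
  obtain ⟨M₀, hMU₀⟩ := hUb.subset_closedBall 0
  set M := max M₀ 1 with hMdef
  have hM1 : (0:ℝ) < M := lt_of_lt_of_le one_pos (le_max_right _ _)
  have hMU : U ⊆ Metric.closedBall 0 M :=
    hMU₀.trans (Metric.closedBall_subset_closedBall (le_max_left _ _))
  set κ := (volume (Metric.ball (0:EuclideanSpace ℝ (Fin 3)) 1)).toReal with hκdef
  have hκ0 : 0 ≤ κ := ENNReal.toReal_nonneg
  have hd20 : (0:ℝ) < d/2 := by linarith
  have hx0 : (0:ℝ) ≤ ‖x‖ := norm_nonneg x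
  set C₁ := s * (s+3) * ‖x‖ * M ^ 3 * κ / (d/2) ^ (s+2) with hC₁def
  set C₂ := 16 * s * ‖x‖ * κ * d ^ 2 / (d/2) ^ (s+1) with hC₂def
  have hC₁0 : 0 ≤ C₁ := by
    apply div_nonneg _ (Real.rpow_pos_of_pos hd20 _).le
    exact mul_nonneg (mul_nonneg (mul_nonneg (mul_nonneg hs0.le (by linarith)) hx0)
      (pow_nonneg hM1.le 3)) hκ0
  have hC₂0 : 0 ≤ C₂ := by
    apply div_nonneg _ (Real.rpow_pos_of_pos hd20 _).le
    exact mul_nonneg (mul_nonneg (mul_nonneg (mul_nonneg (by norm_num) hs0.le) hx0) hκ0)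
      (sq_nonneg d)
  set R₀ := max 1 (2*(‖x‖+1)/d) with hR₀def
  -- the key quantitative estimate
  have key : ∀ R : ℝ, R₀ ≤ R →
      ‖(∫ y in (fun z => z - x) '' (R • U), f y) - ∫ y in R • U, f y‖
        ≤ (C₁ + C₂ + 1) * R ^ 2 / R ^ (s + 1) := by
    intro R hR
    have hR1 : (1:ℝ) ≤ R := le_trans (le_max_left _ _) hR
    have hR0 : (0:ℝ) < R := lt_of_lt_of_le one_pos hR1
    set ρ := R * d with hρdef
    have hρ0 : (0:ℝ) < ρ := mul_pos hR0 hd0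
    have hρa : ‖x‖ + 1 ≤ ρ / 2 := by
      have h := le_trans (le_max_right _ _) hR
      rw [div_le_iff₀ hd0] at h
      rw [hρdef]; linarith
    have hρ2 : (1:ℝ) ≤ ρ / 2 := by linarith
    set B := R • U with hBdef
    set B₀ := Metric.ball (0:EuclideanSpace ℝ (Fin 3)) ρ with hB₀def
    set B₀' := Metric.ball (-x) ρ with hB₀'def
    have hB₀B : B₀ ⊆ B := by
      have h1 : R • Metric.ball (0:EuclideanSpace ℝ (Fin 3)) d ⊆ B := Set.smul_set_mono hdU
      have h2 : R • Metric.ball (0:EuclideanSpace ℝ (Fin 3)) d = B₀ := by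
        rw [_root_.smul_ball hR0.ne' (0:EuclideanSpace ℝ (Fin 3)) d, smul_zero, Real.norm_eq_abs,
          abs_of_pos hR0]
      rwa [h2] at h1
    have hBsub : B ⊆ Metric.closedBall 0 (R*M) := by
      have h1 : B ⊆ R • Metric.closedBall (0:EuclideanSpace ℝ (Fin 3)) M := Set.smul_set_mono hMU
      rwa [smul_closedBall R (0:EuclideanSpace ℝ (Fin 3)) hM1.le, smul_zero, Real.norm_eq_abs,
        abs_of_pos hR0] at h1
    have hBb : Bornology.IsBounded B := Metric.isBounded_closedBall.subset hBsub
    have hBm : MeasurableSet B := (hUo.smul₀ hR0.ne').measurableSet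
    -- splitting of integrals over B
    have hsplit : ∀ g : EuclideanSpace ℝ (Fin 3) → EuclideanSpace ℝ (Fin 3), Continuous g →
        ∫ y in B, g y = (∫ y in B₀, g y) + ∫ y in B \ B₀, g y := by
      intro g hg
      rw [← setIntegral_union disjoint_sdiff_self_right (hBm.diff measurableSet_ball)
          (hint g hg _ Metric.isBounded_ball) (hint g hg _ (hBb.subset Set.diff_subset)),
        Set.union_diff_cancel hB₀B]
    have himg : (fun z : EuclideanSpace ℝ (Fin 3) => z - x) '' B₀ = B₀' := by
      ext z
      simp only [hB₀def, hB₀'def, Set.mem_image, Metric.mem_ball, dist_zero_right, dist_eq_norm, sub_zero]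
      constructor
      · rintro ⟨w, hw, rfl⟩
        rw [show w - x - -x = w by abel]
        exact hw
      · intro hz
        refine ⟨z + x, ?_, by abel⟩
        rw [show z + x = z - -x by abel]
        exact hz
    have hdecomp : (∫ y in (fun z => z - x) '' B, f y) - ∫ y in B, f y
        = ((∫ y in B₀', f y) - ∫ y in B₀, f y)
          + ∫ y in B \ B₀, (f (y - x) - f y) := by
      rw [hT B, hsplit _ hgc, hsplit f hfc, ← hT B₀, himg,
        integral_sub (hint _ hgc _ (hBb.subset Set.diff_subset))
          (hint f hfc _ (hBb.subset Set.diff_subset))]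
      abel
    have hT2 : (∫ y in B₀', f y) - ∫ y in B₀, f y
        = (∫ y in B₀' \ B₀, f y) - ∫ y in B₀ \ B₀', f y := by
      have e1 : ∫ y in B₀', f y = (∫ y in B₀' \ B₀, f y) + ∫ y in B₀' ∩ B₀, f y := by
        conv_lhs => rw [← Set.diff_union_inter B₀' B₀]
        exact setIntegral_union (Set.disjoint_left.2 fun z hz1 hz2 => hz1.2 hz2.2)
          (measurableSet_ball.inter measurableSet_ball)
          (hint f hfc _ (Metric.isBounded_ball.subset Set.diff_subset))
          (hint f hfc _ (Metric.isBounded_ball.subset Set.inter_subset_left))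
      have e2 : ∫ y in B₀, f y = (∫ y in B₀ \ B₀', f y) + ∫ y in B₀ ∩ B₀', f y := by
        conv_lhs => rw [← Set.diff_union_inter B₀ B₀']
        exact setIntegral_union (Set.disjoint_left.2 fun z hz1 hz2 => hz1.2 hz2.2)
          (measurableSet_ball.inter measurableSet_ball)
          (hint f hfc _ (Metric.isBounded_ball.subset Set.diff_subset))
          (hint f hfc _ (Metric.isBounded_ball.subset Set.inter_subset_left))
      rw [e1, e2, Set.inter_comm B₀' B₀]
      abel
    -- the annulus
    set W := Metric.closedBall (0:EuclideanSpace ℝ (Fin 3)) (ρ + ‖x‖) \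
        Metric.ball (0:EuclideanSpace ℝ (Fin 3)) (ρ - ‖x‖) with hWdef
    have hWb : Bornology.IsBounded W := Metric.isBounded_closedBall.subset Set.diff_subset
    have hsub1 : B₀' \ B₀ ⊆ W := by
      rintro z ⟨hz1, hz2⟩
      simp only [hB₀'def, Metric.mem_ball, dist_eq_norm] at hz1
      simp only [hB₀def, Metric.mem_ball, dist_zero_right, not_lt] at hz2
      have hZx : ‖z + x‖ < ρ := by rw [show z + x = z - -x by abel]; exact hz1
      have h3 : ‖z‖ ≤ ‖z + x‖ + ‖x‖ := by
        calc ‖z‖ = ‖z + x + -x‖ := by rw [show z + x + -x = z by abel]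
          _ ≤ ‖z + x‖ + ‖-x‖ := norm_add_le _ _
          _ = ‖z + x‖ + ‖x‖ := by rw [norm_neg]
      constructor
      · simp only [Metric.mem_closedBall, dist_zero_right]
        linarith
      · simp only [Metric.mem_ball, dist_zero_right, not_lt]
        linarith
    have hsub2 : B₀ \ B₀' ⊆ W := by
      rintro z ⟨hz1, hz2⟩
      simp only [hB₀def, Metric.mem_ball, dist_zero_right] at hz1
      simp only [hB₀'def, Metric.mem_ball, dist_eq_norm, not_lt] at hz2
      have hZx : ρ ≤ ‖z + x‖ := by rw [show z + x = z - -x by abel]; exact hz2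
      have h3 : ‖z + x‖ ≤ ‖z‖ + ‖x‖ := norm_add_le _ _
      constructor
      · simp only [Metric.mem_closedBall, dist_zero_right]; linarith
      · simp only [Metric.mem_ball, dist_zero_right, not_lt]; linarith
    have hWf : ∀ z ∈ W, ‖f z‖ ≤ s / (ρ/2) ^ (s+1) := by
      rintro z ⟨_, hz2⟩
      simp only [Metric.mem_ball, dist_zero_right, not_lt] at hz2
      exact hfb (ρ/2) (by linarith) z (by linarith)
    have hWfin : volume W ≠ ⊤ :=
      (lt_of_le_of_lt (measure_mono Set.diff_subset) measure_closedBall_lt_top).ne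
    have hWvol : (volume W).toReal ≤ 8 * ‖x‖ * ρ^2 * κ := by
      have hle : volume W ≤ ENNReal.ofReal (8 * ‖x‖ * ρ^2) *
          volume (Metric.ball (0:EuclideanSpace ℝ (Fin 3)) 1) := by
        have hbsub : Metric.ball (0:EuclideanSpace ℝ (Fin 3)) (ρ - ‖x‖) ⊆
            Metric.closedBall (0:EuclideanSpace ℝ (Fin 3)) (ρ + ‖x‖) :=
          (Metric.ball_subset_ball (by linarith)).trans Metric.ball_subset_closedBall
        have h1 : volume W = volume (Metric.closedBall (0:EuclideanSpace ℝ (Fin 3)) (ρ + ‖x‖))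
            - volume (Metric.ball (0:EuclideanSpace ℝ (Fin 3)) (ρ - ‖x‖)) :=
          measure_diff hbsub measurableSet_ball.nullMeasurableSet measure_ball_lt_top.ne
        rw [h1, Measure.addHaar_closedBall _ _ (by linarith : (0:ℝ) ≤ ρ + ‖x‖),
          Measure.addHaar_ball _ _ (by linarith : (0:ℝ) ≤ ρ - ‖x‖),
          finrank_euclideanSpace_fin]
        rw [tsub_le_iff_right, ← add_mul,
          ← ENNReal.ofReal_add (by positivity) (pow_nonneg (by linarith) 3)]
        apply mul_le_mul_left
        apply ENNReal.ofReal_le_ofReal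
        nlinarith [mul_nonneg (mul_nonneg hx0 (by linarith : (0:ℝ) ≤ ρ - ‖x‖))
          (by linarith : (0:ℝ) ≤ ρ + ‖x‖)]
      calc (volume W).toReal
          ≤ (ENNReal.ofReal (8 * ‖x‖ * ρ^2) *
              volume (Metric.ball (0:EuclideanSpace ℝ (Fin 3)) 1)).toReal :=
            ENNReal.toReal_mono (ENNReal.mul_ne_top ENNReal.ofReal_ne_top
              measure_ball_lt_top.ne) hle
        _ = 8 * ‖x‖ * ρ^2 * κ := by
            rw [ENNReal.toReal_mul, ENNReal.toReal_ofReal (by positivity)]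
    have hbnd : ∀ t : Set (EuclideanSpace ℝ (Fin 3)), t ⊆ W →
        ‖∫ y in t, f y‖ ≤ s / (ρ/2) ^ (s+1) * (8 * ‖x‖ * ρ^2 * κ) := by
      intro t htW
      have hfin : volume t < ⊤ := lt_of_le_of_lt (measure_mono htW) hWfin.lt_top
      refine (norm_setIntegral_le_of_norm_le_const hfin (fun z hz => hWf z (htW hz))).trans ?_
      apply mul_le_mul_of_nonneg_left _ (div_nonneg hs0.le (Real.rpow_pos_of_pos
        (by linarith : (0:ℝ) < ρ/2) _).le)
      exact le_trans (ENNReal.toReal_mono hWfin (measure_mono htW)) hWvol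
    -- the outer term
    have hT1 : ‖∫ y in B \ B₀, (f (y - x) - f y)‖
        ≤ s*(s+3)*‖x‖/(ρ/2) ^ (s+2) * ((R*M)^3 * κ) := by
      have hfin : volume (B \ B₀) < ⊤ :=
        lt_of_le_of_lt (measure_mono (Set.diff_subset.trans hBsub)) measure_closedBall_lt_top
      have hptwise : ∀ y ∈ B \ B₀, ‖f (y - x) - f y‖ ≤ s*(s+3)*‖x‖/(ρ/2) ^ (s+2) := by
        rintro y ⟨hy1, hy2⟩
        simp only [hB₀def, Metric.mem_ball, dist_zero_right, not_lt] at hy2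
        have hns : ‖y‖ - ‖x‖ ≤ ‖y - x‖ := norm_sub_norm_le y x
        have hyx : ρ/2 ≤ ‖y - x‖ := by linarith
        have hy' : ρ/2 ≤ ‖y‖ := by linarith
        have hξy : ξ y = 1 := hξ1 y (by linarith)
        have hξyx : ξ (y - x) = 1 := hξ1 _ (by linarith)
        have heq : f (y - x) - f y
            = ((-s) / ‖y - x‖ ^ (s+2)) • (y - x) - ((-s) / ‖y‖ ^ (s+2)) • y := by
          simp only [hfdef, hξy, hξyx, one_mul]
        rw [heq]
        exact aux_vec_diff s hs0 x y hρ2 hy' hyx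
      refine (norm_setIntegral_le_of_norm_le_const hfin hptwise).trans ?_
      apply mul_le_mul_of_nonneg_left _ (div_nonneg (mul_nonneg (mul_nonneg hs0.le
        (by linarith)) hx0) (Real.rpow_pos_of_pos (by linarith : (0:ℝ) < ρ/2) _).le)
      refine le_trans (ENNReal.toReal_mono measure_closedBall_lt_top.ne
        (measure_mono (Set.diff_subset.trans hBsub))) ?_
      rw [Measure.addHaar_closedBall _ _ (mul_nonneg hR0.le hM1.le),
        finrank_euclideanSpace_fin, ENNReal.toReal_mul,
        ENNReal.toReal_ofReal (pow_nonneg (mul_nonneg hR0.le hM1.le) 3)]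
    -- algebra
    have hRs1 : (0:ℝ) < R ^ (s+1) := Real.rpow_pos_of_pos hR0 _
    have halg : s / (ρ/2) ^ (s+1) * (8 * ‖x‖ * ρ^2 * κ) * 2
          + s*(s+3)*‖x‖/(ρ/2) ^ (s+2) * ((R*M)^3 * κ)
        = (C₂ + C₁) * R ^ 2 / R ^ (s+1) := by
      have hq1 : (R * (d/2)) ^ (s+1) = R ^ (s+1) * (d/2) ^ (s+1) :=
        Real.mul_rpow hR0.le hd20.le
      have hq2 : (R * (d/2)) ^ (s+2) = R ^ (s+2) * (d/2) ^ (s+2) :=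
        Real.mul_rpow hR0.le hd20.le
      have hRs2 : R ^ (s+2) = R ^ (s+1) * R := by
        rw [← Real.rpow_add_one hR0.ne' (s+1)]; ring_nf
      have h1 : (0:ℝ) < (d/2) ^ (s+1) := Real.rpow_pos_of_pos hd20 _
      have h2 : (0:ℝ) < (d/2) ^ (s+2) := Real.rpow_pos_of_pos hd20 _
      rw [hρdef, hC₁def, hC₂def, show R * d / 2 = R * (d/2) by ring, hq1, hq2, hRs2]
      field_simp
      ring
    calc ‖(∫ y in (fun z => z - x) '' B, f y) - ∫ y in B, f y‖
        = ‖((∫ y in B₀' \ B₀, f y) - ∫ y in B₀ \ B₀', f y)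
            + ∫ y in B \ B₀, (f (y - x) - f y)‖ := by rw [hdecomp, hT2]
      _ ≤ ‖(∫ y in B₀' \ B₀, f y) - ∫ y in B₀ \ B₀', f y‖
            + ‖∫ y in B \ B₀, (f (y - x) - f y)‖ := norm_add_le _ _
      _ ≤ (‖∫ y in B₀' \ B₀, f y‖ + ‖∫ y in B₀ \ B₀', f y‖)
            + ‖∫ y in B \ B₀, (f (y - x) - f y)‖ := by
            gcongr
            exact norm_sub_le _ _
      _ ≤ (s / (ρ/2) ^ (s+1) * (8 * ‖x‖ * ρ^2 * κ)
            + s / (ρ/2) ^ (s+1) * (8 * ‖x‖ * ρ^2 * κ))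
            + s*(s+3)*‖x‖/(ρ/2) ^ (s+2) * ((R*M)^3 * κ) := by
            exact add_le_add (add_le_add (hbnd _ hsub1) (hbnd _ hsub2)) hT1
      _ = (C₂ + C₁) * R ^ 2 / R ^ (s+1) := by rw [← halg]; ring
      _ ≤ (C₁ + C₂ + 1) * R ^ 2 / R ^ (s+1) := by
            have h2 : (0:ℝ) ≤ R^2 := sq_nonneg R
            apply (div_le_div_iff_of_pos_right hRs1).2
            nlinarith [h2]
  constructor
  · exact ⟨C₁ + C₂ + 1, by linarith, R₀, fun R hR => key R hR⟩
  · have hlim : Tendsto (fun R : ℝ => (C₁+C₂+1) * R ^ 2 / R ^ (s+1)) atTop (nhds 0) := by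
      have h1 : Tendsto (fun R : ℝ => (C₁+C₂+1) * R ^ (-(s-1))) atTop
          (nhds ((C₁+C₂+1) * 0)) :=
        (tendsto_rpow_neg_atTop (by linarith : (0:ℝ) < s - 1)).const_mul _
      rw [mul_zero] at h1
      refine h1.congr' ?_
      filter_upwards [eventually_gt_atTop (0:ℝ)] with R hR
      rw [mul_div_assoc]
      congr 1
      rw [show -(s-1) = 2 - (s+1) by ring, Real.rpow_sub hR,
        show ((2:ℝ)) = ((2:ℕ):ℝ) by norm_num, Real.rpow_natCast]
    exact squeeze_zero_norm' (eventually_atTop.2 ⟨R₀, key⟩) hlim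
end

section
/- Let 1/2 < s < 1 and v ∈ ℝ³ with |v| = 1. Then the integral ∫_{ℝ³} |ξ_⊥|² (∫₀¹ dτ / |vτ - ξ|^{s+2})² dξ is finite, where ξ_⊥ = ξ - (ξ·v)v. -/
/-!
Write `ρ = ‖ξ_⊥‖` and `r(τ) = ‖τ • v - ξ‖`, so that `r² = (τ - ⟪ξ, v⟫)² + ρ²`. Since `ρ ≤ r`, the
integrand is at most `(∫₀¹ r^{-(s+1)} dτ)²`. Near the segment, `r^{-(s+1)}` is at most
`ρ^{-(s+1)/2} |τ - ⟪ξ, v⟫|^{-(s+1)/2}`, and the second factor has a `τ`-integral bounded uniformly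
in `ξ`; this leaves `C ρ^{-(s+1)}`, which is integrable on balls because `s + 1 < 2`, the
codimension of the line `ℝ v` (integrate over `ℝ v × vᗮ`). Far from the origin
`r ≥ (1 + ‖ξ‖) / 3`, so the integrand is `O((1 + ‖ξ‖)^{-2(s+1)})`, integrable since `2(s+1) > 3`.
-/

open MeasureTheory ENNReal Set Metric Module

theorem ENNReal.rpow_neg_le_rpow_neg {a b : ℝ≥0∞} (h : a ≤ b) {β : ℝ} (hβ : 0 ≤ β) :
    b ^ (-β) ≤ a ^ (-β) := by
  rw [ENNReal.rpow_neg, ENNReal.rpow_neg]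
  exact ENNReal.inv_le_inv.mpr (ENNReal.rpow_le_rpow h hβ)

theorem ENNReal.mul_rpow_neg_add_one_le {a b : ℝ≥0∞} (h : a ≤ b) (hb : b ≠ ⊤) (p : ℝ) :
    a * b ^ (-(p + 1)) ≤ b ^ (-p) := by
  rcases eq_or_ne b 0 with rfl | hb₀
  · simp [nonpos_iff_eq_zero.1 h]
  · calc a * b ^ (-(p + 1)) ≤ b * b ^ (-(p + 1)) := by gcongr
      _ = b ^ (-p) := by
        rw [show -p = 1 + -(p + 1) by ring, ENNReal.rpow_add _ _ hb₀ hb, ENNReal.rpow_one]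

theorem ENNReal.rpow_neg_le_mul_rpow_neg_half {a b c : ℝ≥0∞} (ha : a ≤ c) (hb : b ≤ c) {p : ℝ}
    (hp : 0 ≤ p) : c ^ (-p) ≤ a ^ (-(p / 2)) * b ^ (-(p / 2)) := by
  calc c ^ (-p) = c ^ (-(p / 2)) * c ^ (-(p / 2)) := by
        rw [← sq, ← ENNReal.rpow_two, ← ENNReal.rpow_mul]; ring_nf
    _ ≤ a ^ (-(p / 2)) * b ^ (-(p / 2)) :=
        mul_le_mul' (ENNReal.rpow_neg_le_rpow_neg ha (by linarith))
          (ENNReal.rpow_neg_le_rpow_neg hb (by linarith))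

theorem ENNReal.rpow_neg_sq (x : ℝ≥0∞) (p : ℝ) : (x ^ (-p)) ^ 2 = x ^ (-(2 * p)) := by
  rw [← ENNReal.rpow_two, ← ENNReal.rpow_mul]; ring_nf

section HaarIntegrability

variable {F : Type*} [NormedAddCommGroup F] [NormedSpace ℝ F] [FiniteDimensional ℝ F]
  [MeasurableSpace F] [BorelSpace F] (μ : Measure F) [μ.IsAddHaarMeasure]

theorem lintegral_ball_ofReal_norm_rpow_neg_lt_top {α : ℝ} (hα₀ : 0 ≤ α) (hα : α < finrank ℝ F)
    (r : ℝ) :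
    ∫⁻ x in ball 0 r, ENNReal.ofReal ‖x‖ ^ (-α) ∂μ < ⊤ := by
  have hd : 1 ≤ finrank ℝ F := by exact_mod_cast (hα₀.trans_lt hα)
  have : Nontrivial F := Module.nontrivial_of_finrank_pos (R := ℝ) hd
  have hint : IntegrableOn (fun x : F => ‖x‖ ^ (-α)) (ball 0 r) μ :=
    integrableOn_ball_of_norm_le_rpow (C := 1) hd hα
      (Filter.Eventually.of_forall fun x => by
        simp [abs_of_nonneg (Real.rpow_nonneg (norm_nonneg x) _)])
      (measurable_norm.pow_const _).aestronglyMeasurable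
  refine lt_of_eq_of_lt (setLIntegral_congr_fun_ae measurableSet_ball ?_) hint.setLIntegral_lt_top
  filter_upwards [Measure.ae_ne μ 0] with x hx _
  exact ENNReal.ofReal_rpow_of_pos (norm_pos_iff.2 hx)

theorem lintegral_ofReal_one_add_norm_div_rpow_neg_lt_top {c q : ℝ} (hc : 0 < c)
    (hq : finrank ℝ F < q) :
    ∫⁻ x, ENNReal.ofReal ((1 + ‖x‖) / c) ^ (-q) ∂μ < ⊤ := by
  have h : ∀ x : F, ENNReal.ofReal ((1 + ‖x‖) / c) ^ (-q)
      = ENNReal.ofReal (c ^ q) * ENNReal.ofReal ((1 + ‖x‖) ^ (-q)) := fun x => by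
    rw [ENNReal.ofReal_rpow_of_pos (by positivity), ← ENNReal.ofReal_mul (by positivity),
      Real.div_rpow (by positivity) hc.le, Real.rpow_neg hc.le, div_inv_eq_mul, mul_comm]
  simp_rw [h]
  rw [lintegral_const_mul' _ _ ofReal_ne_top]
  exact mul_lt_top ofReal_lt_top (finite_integral_one_add_norm hq)

end HaarIntegrability

theorem setLIntegral_ofReal_abs_sub_rpow_neg_le {β : ℝ} (hβ : 0 ≤ β) (S : Set ℝ) (t : ℝ) :
    ∫⁻ τ in S, ENNReal.ofReal |τ - t| ^ (-β)
      ≤ (∫⁻ u in ball (0 : ℝ) 1, ENNReal.ofReal ‖u‖ ^ (-β)) + volume S := by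
  set g := (ball (0 : ℝ) 1).indicator fun u => ENNReal.ofReal ‖u‖ ^ (-β)
  have hle : ∀ u : ℝ, ENNReal.ofReal ‖u‖ ^ (-β) ≤ g u + 1 := fun u => by
    by_cases hu : u ∈ ball (0 : ℝ) 1
    · simp [g, indicator_of_mem hu]
    · have h₁ : (1 : ℝ) ≤ ‖u‖ := by simpa using hu
      simpa [g, indicator_of_notMem hu] using
        ENNReal.rpow_neg_le_rpow_neg (ENNReal.one_le_ofReal.2 h₁) hβ
  calc ∫⁻ τ in S, ENNReal.ofReal |τ - t| ^ (-β)
      ≤ ∫⁻ τ in S, (g (τ - t) + 1) := lintegral_mono fun τ => hle (τ - t)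
    _ = (∫⁻ τ in S, g (τ - t)) + volume S := by
        rw [lintegral_add_right _ measurable_const, setLIntegral_one]
    _ ≤ (∫⁻ τ, g (τ - t)) + volume S := by gcongr; exact Measure.restrict_le_self
    _ = (∫⁻ u in ball (0 : ℝ) 1, ENNReal.ofReal ‖u‖ ^ (-β)) + volume S := by
        rw [lintegral_sub_right_eq_self, lintegral_indicator measurableSet_ball]

section Transverse

variable {E : Type*} [NormedAddCommGroup E] [InnerProductSpace ℝ E] [FiniteDimensional ℝ E]
  [MeasurableSpace E] [BorelSpace E]

theorem lintegral_closedBall_ofReal_norm_sub_starProjection_rpow_neg_lt_top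
    (K : Submodule ℝ E) {α : ℝ} (hα₀ : 0 ≤ α) (hα : α < finrank ℝ Kᗮ) (R : ℝ) :
    ∫⁻ ξ in closedBall 0 R, ENNReal.ofReal ‖ξ - K.starProjection ξ‖ ^ (-α) < ⊤ := by
  set φ : E → K × Kᗮ := fun ξ => WithLp.ofLp (K.orthogonalDecomposition ξ)
  have hφ : MeasurePreserving φ :=
    (WithLp.volume_preserving_ofLp K Kᗮ).comp K.orthogonalDecomposition.measurePreserving
  have hφ₂ : ∀ ξ, ‖(φ ξ).2‖ = ‖ξ - K.starProjection ξ‖ := fun ξ => by simp [φ]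
  have hφ_mem : closedBall 0 R ⊆ φ ⁻¹' (closedBall 0 R ×ˢ ball 0 (R + 1)) := fun ξ hξ => by
    have h₁ : ‖(φ ξ).1‖ ≤ ‖ξ‖ := by simpa [φ] using K.norm_orthogonalProjectionOnto_apply_le ξ
    have h₂ : ‖(φ ξ).2‖ ≤ ‖ξ‖ := by simpa [φ] using Kᗮ.norm_orthogonalProjectionOnto_apply_le ξ
    rw [mem_closedBall_zero_iff] at hξ
    exact ⟨mem_closedBall_zero_iff.2 (h₁.trans hξ), mem_ball_zero_iff.2 (by linarith)⟩
  have hg : Measurable fun b : Kᗮ => ENNReal.ofReal ‖b‖ ^ (-α) := by fun_prop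
  calc ∫⁻ ξ in closedBall 0 R, ENNReal.ofReal ‖ξ - K.starProjection ξ‖ ^ (-α)
      ≤ ∫⁻ ξ in φ ⁻¹' (closedBall 0 R ×ˢ ball 0 (R + 1)), ENNReal.ofReal ‖(φ ξ).2‖ ^ (-α) := by
        simp only [hφ₂]; exact lintegral_mono_set hφ_mem
    _ = (∫⁻ b : Kᗮ in ball 0 (R + 1), ENNReal.ofReal ‖b‖ ^ (-α))
          * volume (closedBall (0 : K) R) := by
        rw [hφ.setLIntegral_comp_preimage (measurableSet_closedBall.prod measurableSet_ball)
            (f := fun z : K × Kᗮ => ENNReal.ofReal ‖z.2‖ ^ (-α)) (hg.comp measurable_snd),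
          Measure.volume_eq_prod, setLIntegral_prod (fun z : K × Kᗮ => ENNReal.ofReal ‖z.2‖ ^ (-α))
            (hg.comp measurable_snd).aemeasurable]
        simp only [setLIntegral_const]
    _ < ⊤ := ENNReal.mul_lt_top (lintegral_ball_ofReal_norm_rpow_neg_lt_top _ hα₀ hα _)
        measure_closedBall_lt_top

theorem lintegral_closedBall_ofReal_norm_sub_inner_smul_rpow_neg_lt_top {v : E}
    (hv : ‖v‖ = 1) {α : ℝ} (hα₀ : 0 ≤ α) (hα : α + 1 < finrank ℝ E) (R : ℝ) :
    ∫⁻ ξ in closedBall 0 R, ENNReal.ofReal ‖ξ - inner ℝ ξ v • v‖ ^ (-α) < ⊤ := by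
  have hK := (ℝ ∙ v).finrank_add_finrank_orthogonal
  rw [finrank_span_singleton (by rintro rfl; simp at hv)] at hK
  simpa only [Submodule.starProjection_unit_singleton ℝ hv, real_inner_comm] using
    lintegral_closedBall_ofReal_norm_sub_starProjection_rpow_neg_lt_top (ℝ ∙ v) hα₀
      (by rw [← hK] at hα; push_cast at hα; linarith) R

end Transverse

section Segment

variable {E : Type*} [NormedAddCommGroup E] [InnerProductSpace ℝ E] {v : E}

theorem norm_smul_sub_sq_eq (hv : ‖v‖ = 1) (τ : ℝ) (ξ : E) :
    ‖τ • v - ξ‖ ^ 2 = (τ - inner ℝ ξ v) ^ 2 + ‖ξ - inner ℝ ξ v • v‖ ^ 2 := by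
  have horth : inner ℝ v (ξ - inner ℝ ξ v • v) = 0 := by
    rw [inner_sub_right, real_inner_smul_right, real_inner_self_eq_norm_sq, hv, real_inner_comm]
    ring
  rw [show τ • v - ξ = (τ - inner ℝ ξ v) • v - (ξ - inner ℝ ξ v • v) by module,
    norm_sub_sq_real, real_inner_smul_left, horth, norm_smul, hv]
  simp

theorem norm_sub_inner_smul_le (hv : ‖v‖ = 1) (τ : ℝ) (ξ : E) :
    ‖ξ - inner ℝ ξ v • v‖ ≤ ‖τ • v - ξ‖ :=
  (sq_le_sq₀ (norm_nonneg _) (norm_nonneg _)).1 <| by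
    rw [norm_smul_sub_sq_eq hv]; nlinarith [sq_nonneg (τ - inner ℝ ξ v)]

theorem abs_sub_inner_le (hv : ‖v‖ = 1) (τ : ℝ) (ξ : E) :
    |τ - inner ℝ ξ v| ≤ ‖τ • v - ξ‖ :=
  abs_le_of_sq_le_sq (by rw [norm_smul_sub_sq_eq hv]; nlinarith [sq_nonneg ‖ξ - inner ℝ ξ v • v‖])
    (norm_nonneg _)

noncomputable def segmentPotential (v : E) (p : ℝ) (ξ : E) : ℝ≥0∞ :=
  ∫⁻ τ in Icc (0 : ℝ) 1, ENNReal.ofReal ‖τ • v - ξ‖ ^ (-p)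

theorem ofReal_sq_mul_segmentPotential_sq_le (hv : ‖v‖ = 1) (p : ℝ) (ξ : E) :
    ENNReal.ofReal (‖ξ - inner ℝ ξ v • v‖ ^ 2) * segmentPotential v (p + 1) ξ ^ 2
      ≤ segmentPotential v p ξ ^ 2 := by
  rw [ENNReal.ofReal_pow (norm_nonneg _), ← mul_pow, segmentPotential,
    ← lintegral_const_mul' _ _ ofReal_ne_top]
  gcongr
  exact lintegral_mono fun τ => ENNReal.mul_rpow_neg_add_one_le
    (ofReal_le_ofReal (norm_sub_inner_smul_le hv τ ξ)) ofReal_ne_top p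

theorem exists_segmentPotential_sq_le (hv : ‖v‖ = 1) {p : ℝ} (hp₀ : 0 ≤ p) (hp : p < 2) :
    ∃ C < ⊤, ∀ ξ : E,
      segmentPotential v p ξ ^ 2 ≤ C * ENNReal.ofReal ‖ξ - inner ℝ ξ v • v‖ ^ (-p) := by
  set C := (∫⁻ u in ball (0 : ℝ) 1, ENNReal.ofReal ‖u‖ ^ (-(p / 2))) + volume (Icc (0 : ℝ) 1)
  have hC : C < ⊤ := add_lt_top.2
    ⟨lintegral_ball_ofReal_norm_rpow_neg_lt_top _ (by linarith) (by simp; linarith) 1,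
      measure_Icc_lt_top⟩
  refine ⟨C ^ 2, pow_lt_top hC, fun ξ => ?_⟩
  have hseg : segmentPotential v p ξ ≤ ENNReal.ofReal ‖ξ - inner ℝ ξ v • v‖ ^ (-(p / 2)) * C :=
    calc segmentPotential v p ξ
        ≤ ∫⁻ τ in Icc (0 : ℝ) 1, ENNReal.ofReal ‖ξ - inner ℝ ξ v • v‖ ^ (-(p / 2))
            * ENNReal.ofReal |τ - inner ℝ ξ v| ^ (-(p / 2)) :=
          lintegral_mono fun τ => ENNReal.rpow_neg_le_mul_rpow_neg_half
            (ofReal_le_ofReal (norm_sub_inner_smul_le hv τ ξ))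
            (ofReal_le_ofReal (abs_sub_inner_le hv τ ξ)) hp₀
      _ = ENNReal.ofReal ‖ξ - inner ℝ ξ v • v‖ ^ (-(p / 2))
            * ∫⁻ τ in Icc (0 : ℝ) 1, ENNReal.ofReal |τ - inner ℝ ξ v| ^ (-(p / 2)) :=
          lintegral_const_mul _ (by fun_prop)
      _ ≤ _ := by gcongr; exact setLIntegral_ofReal_abs_sub_rpow_neg_le (by linarith) _ _
  calc segmentPotential v p ξ ^ 2
      ≤ (ENNReal.ofReal ‖ξ - inner ℝ ξ v • v‖ ^ (-(p / 2)) * C) ^ 2 := by gcongr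
    _ = C ^ 2 * ENNReal.ofReal ‖ξ - inner ℝ ξ v • v‖ ^ (-p) := by
        rw [mul_pow, ENNReal.rpow_neg_sq, mul_comm, mul_div_cancel₀ _ two_ne_zero]

theorem segmentPotential_sq_le_of_two_le_norm (hv : ‖v‖ = 1) {p : ℝ} (hp : 0 ≤ p) {ξ : E}
    (hξ : 2 ≤ ‖ξ‖) :
    segmentPotential v p ξ ^ 2 ≤ ENNReal.ofReal ((1 + ‖ξ‖) / 3) ^ (-(2 * p)) := by
  have hle : ∀ τ ∈ Icc (0 : ℝ) 1, (1 + ‖ξ‖) / 3 ≤ ‖τ • v - ξ‖ := fun τ hτ => by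
    have hτv : ‖τ • v‖ ≤ 1 := by
      rw [norm_smul, hv, mul_one, Real.norm_of_nonneg hτ.1]; exact hτ.2
    have := norm_sub_norm_le ξ (τ • v)
    rw [norm_sub_rev] at this
    linarith
  calc segmentPotential v p ξ ^ 2
      ≤ (∫⁻ _ in Icc (0 : ℝ) 1, ENNReal.ofReal ((1 + ‖ξ‖) / 3) ^ (-p)) ^ 2 := by
        gcongr
        exact setLIntegral_mono measurable_const fun τ hτ =>
          ENNReal.rpow_neg_le_rpow_neg (ofReal_le_ofReal (hle τ hτ)) hp
    _ = ENNReal.ofReal ((1 + ‖ξ‖) / 3) ^ (-(2 * p)) := by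
        rw [setLIntegral_const, Real.volume_Icc, sub_zero, ofReal_one, mul_one,
          ENNReal.rpow_neg_sq]

end Segment

theorem stmt_18 (s : ℝ) (hs1 : 1/2 < s) (hs2 : s < 1)
    (v : EuclideanSpace ℝ (Fin 3)) (hv : ‖v‖ = 1) :
    (∫⁻ ξ : EuclideanSpace ℝ (Fin 3),
        ENNReal.ofReal (‖ξ - (inner ℝ ξ v : ℝ) • v‖ ^ 2) *
          (∫⁻ τ in Set.Icc (0:ℝ) 1, ENNReal.ofReal ‖τ • v - ξ‖ ^ (-(s + 2))) ^ 2)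
      < ⊤ := by
  have hp₀ : 0 ≤ s + 1 := by linarith
  have hdim : finrank ℝ (EuclideanSpace ℝ (Fin 3)) = 3 := finrank_euclideanSpace_fin
  have hF : ∀ ξ, ENNReal.ofReal (‖ξ - inner ℝ ξ v • v‖ ^ 2) * segmentPotential v (s + 2) ξ ^ 2
      ≤ segmentPotential v (s + 1) ξ ^ 2 := fun ξ => by
    simpa only [show s + 1 + 1 = s + 2 by ring] using
      ofReal_sq_mul_segmentPotential_sq_le hv (s + 1) ξ
  obtain ⟨C, hC, hnear⟩ := exists_segmentPotential_sq_le hv hp₀ (by linarith)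
  rw [← lintegral_add_compl _ (measurableSet_closedBall (x := 0) (ε := 2))]
  refine add_lt_top.2 ⟨?_, ?_⟩
  · calc _ ≤ ∫⁻ ξ in closedBall 0 2, C * ENNReal.ofReal ‖ξ - inner ℝ ξ v • v‖ ^ (-(s + 1)) :=
          lintegral_mono fun ξ => (hF ξ).trans (hnear ξ)
      _ = C * ∫⁻ ξ in closedBall 0 2, ENNReal.ofReal ‖ξ - inner ℝ ξ v • v‖ ^ (-(s + 1)) :=
          lintegral_const_mul' _ _ hC.ne
      _ < ⊤ := mul_lt_top hC <| lintegral_closedBall_ofReal_norm_sub_inner_smul_rpow_neg_lt_top hv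
          hp₀ (by rw [hdim]; push_cast; linarith) 2
  · calc _ ≤ ∫⁻ ξ in (closedBall 0 2)ᶜ, ENNReal.ofReal ((1 + ‖ξ‖) / 3) ^ (-(2 * (s + 1))) :=
          setLIntegral_mono' measurableSet_closedBall.compl fun ξ hξ => (hF ξ).trans <|
            segmentPotential_sq_le_of_two_le_norm hv hp₀ (le_of_lt (by simpa using hξ))
      _ ≤ ∫⁻ ξ, ENNReal.ofReal ((1 + ‖ξ‖) / 3) ^ (-(2 * (s + 1))) := setLIntegral_le_lintegral _ _
      _ < ⊤ := lintegral_ofReal_one_add_norm_div_rpow_neg_lt_top _ three_pos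
          (by rw [hdim]; push_cast; linarith)
end
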